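/- Let w₁, w₂, w₃ be positive reals satisfying the strict triangle inequalities, and set α_{i0j} = arccos((w_k² − w_i² − w_j²)/(2 w_i w_j)) for {i,j,k} = {1,2,3}. Then α₁₀₂ + α₂₀₃ + α₁₀₃ = 2π. -/

import Mathlib

/-!
By the law of cosines, `arccos ((wᵢ² + wⱼ² - wₖ²) / (2 wᵢ wⱼ))` is the interior angle between the
sides `wᵢ`, `wⱼ` of a triangle with side lengths `w₁, w₂, w₃`, which exists by the triangle
inequalities. Since `arccos (-x) = π - arccos x`, each `α` is the corresponding exterior angle, so
the three of them add up to `3π - π = 2π`.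
-/

open Real EuclideanGeometry

theorem EuclideanGeometry.angle_eq_arccos_of_ne {V P : Type*} [NormedAddCommGroup V]
    [InnerProductSpace ℝ V] [MetricSpace P] [NormedAddTorsor V P] {p₁ p₂ p₃ : P}
    (h₁ : p₁ ≠ p₂) (h₃ : p₃ ≠ p₂) :
    ∠ p₁ p₂ p₃ = arccos ((dist p₁ p₂ ^ 2 + dist p₃ p₂ ^ 2 - dist p₁ p₃ ^ 2) /
      (2 * dist p₁ p₂ * dist p₃ p₂)) := by
  have hcos : cos (∠ p₁ p₂ p₃) = (dist p₁ p₂ ^ 2 + dist p₃ p₂ ^ 2 - dist p₁ p₃ ^ 2) /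
      (2 * dist p₁ p₂ * dist p₃ p₂) := by
    have := law_cos p₁ p₂ p₃
    rw [eq_div_iff (by positivity [dist_pos.2 h₁, dist_pos.2 h₃])]
    linarith
  rw [← hcos, arccos_cos (angle_nonneg _ _ _) (angle_le_pi _ _ _)]

theorem Complex.exists_norm_eq_dist_eq {a b c : ℝ} (hc : 0 < c)
    (ha' : a ≤ b + c) (hb' : b ≤ a + c) (hc' : c ≤ a + b) :
    ∃ z : ℂ, ‖z‖ = b ∧ dist z c = a := by
  -- the abscissa of `z` forced by `b ^ 2 - x ^ 2 = a ^ 2 - (c - x) ^ 2`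
  set x := (b ^ 2 + c ^ 2 - a ^ 2) / (2 * c)
  have hxc : x * (2 * c) = b ^ 2 + c ^ 2 - a ^ 2 := div_mul_cancel₀ _ (by positivity)
  have hxb : x ^ 2 ≤ b ^ 2 := by
    apply sq_le_sq' <;> nlinarith
  refine ⟨x + √(b ^ 2 - x ^ 2) * Complex.I, ?_, ?_⟩
  · rw [Complex.norm_add_mul_I, sq_sqrt (sub_nonneg.2 hxb), add_sub_cancel, sqrt_sq]
    nlinarith
  · have : (x : ℂ) + √(b ^ 2 - x ^ 2) * Complex.I - c =
        ((x - c : ℝ) : ℂ) + √(b ^ 2 - x ^ 2) * Complex.I := by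
      push_cast; ring
    rw [Complex.dist_eq, this, Complex.norm_add_mul_I, sq_sqrt (sub_nonneg.2 hxb),
      show (x - c) ^ 2 + (b ^ 2 - x ^ 2) = a ^ 2 by nlinarith, sqrt_sq]
    nlinarith

theorem Real.arccos_add_arccos_add_arccos_eq_pi {a b c : ℝ} (ha : 0 < a) (hb : 0 < b) (hc : 0 < c)
    (ha' : a ≤ b + c) (hb' : b ≤ a + c) (hc' : c ≤ a + b) :
    arccos ((b ^ 2 + c ^ 2 - a ^ 2) / (2 * b * c)) + arccos ((a ^ 2 + c ^ 2 - b ^ 2) / (2 * a * c))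
      + arccos ((a ^ 2 + b ^ 2 - c ^ 2) / (2 * a * b)) = π := by
  obtain ⟨z, hz, hzc⟩ := Complex.exists_norm_eq_dist_eq hc ha' hb' hc'
  have h0c : dist (0 : ℂ) c = c := by simp [hc.le]
  have h0z : dist (0 : ℂ) z = b := by rw [dist_comm, dist_zero_right, hz]
  have h0c' := dist_pos.1 (h0c ▸ hc)
  have h0z' := dist_pos.1 (h0z ▸ hb)
  have hzc' := dist_pos.1 (hzc ▸ ha)
  have hsum := angle_add_angle_add_angle_eq_pi z h0c'.symm
  rw [angle_eq_arccos_of_ne h0c' hzc', angle_eq_arccos_of_ne hzc'.symm h0z',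
    angle_eq_arccos_of_ne h0z'.symm h0c'.symm, dist_comm (c : ℂ) z, dist_comm z 0,
    dist_comm (c : ℂ) 0, h0c, h0z, hzc] at hsum
  rw [show (c ^ 2 + a ^ 2 - b ^ 2) / (2 * c * a) = (a ^ 2 + c ^ 2 - b ^ 2) / (2 * a * c) by ring]
    at hsum
  linarith

theorem stmt5 (w₁ w₂ w₃ : ℝ) (hw₁ : 0 < w₁) (hw₂ : 0 < w₂) (hw₃ : 0 < w₃)
    (h₁ : w₁ < w₂ + w₃) (h₂ : w₂ < w₁ + w₃) (h₃ : w₃ < w₁ + w₂)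
    (α₁₀₂ α₂₀₃ α₁₀₃ : ℝ)
    (hα₁₀₂ : α₁₀₂ = Real.arccos ((w₃ ^ 2 - w₁ ^ 2 - w₂ ^ 2) / (2 * w₁ * w₂)))
    (hα₂₀₃ : α₂₀₃ = Real.arccos ((w₁ ^ 2 - w₂ ^ 2 - w₃ ^ 2) / (2 * w₂ * w₃)))
    (hα₁₀₃ : α₁₀₃ = Real.arccos ((w₂ ^ 2 - w₁ ^ 2 - w₃ ^ 2) / (2 * w₁ * w₃))) :
    α₁₀₂ + α₂₀₃ + α₁₀₃ = 2 * Real.pi := by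
  have hsum := arccos_add_arccos_add_arccos_eq_pi hw₁ hw₂ hw₃ h₁.le h₂.le h₃.le
  have hext (x y z : ℝ) : arccos ((z ^ 2 - x ^ 2 - y ^ 2) / (2 * x * y)) =
      π - arccos ((x ^ 2 + y ^ 2 - z ^ 2) / (2 * x * y)) := by
    rw [← arccos_neg]; congr 1; ring
  rw [hα₁₀₂, hα₂₀₃, hα₁₀₃, hext w₁ w₂, hext w₂ w₃, hext w₁ w₃]
  linarith
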